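/- arXiv:1908.00331 — 3 statements merged into one kernel-verified Lean document; each statement's English description precedes it below -/
import Mathlib

section
/- For G = ES_1(p,n), the orbits of the natural action of Aut(G) on G are exactly the three sets {e}, Z(G)∖{e} and G∖Z(G), of cardinalities 1, p−1 and p^{2n+1}−p respectively. Equivalently, Aut(G) acts transitively on the non-identity central elements and transitively on the non-central elements. -/
open Matrix

/-- The Heisenberg group `ES₁(p,n)`: carrier `𝔽_p^n × 𝔽_p^n × 𝔽_p`. -/
@[ext]
structure ES1 (p n : ℕ) : Type where
  u : Fin n → ZMod p
  w : Fin n → ZMod p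
  z : ZMod p

namespace ES1

variable {p n : ℕ}

instance : Mul (ES1 p n) :=
  ⟨fun x y => ⟨x.u + y.u, x.w + y.w, x.z + y.z + x.u ⬝ᵥ y.w⟩⟩

@[simp] theorem mul_u (x y : ES1 p n) : (x * y).u = x.u + y.u := rfl
@[simp] theorem mul_w (x y : ES1 p n) : (x * y).w = x.w + y.w := rfl
@[simp] theorem mul_z (x y : ES1 p n) : (x * y).z = x.z + y.z + x.u ⬝ᵥ y.w := rfl

instance : One (ES1 p n) := ⟨⟨0, 0, 0⟩⟩

@[simp] theorem one_u : (1 : ES1 p n).u = 0 := rfl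
@[simp] theorem one_w : (1 : ES1 p n).w = 0 := rfl
@[simp] theorem one_z : (1 : ES1 p n).z = 0 := rfl

instance : Inv (ES1 p n) :=
  ⟨fun x => ⟨-x.u, -x.w, -x.z + x.u ⬝ᵥ x.w⟩⟩

@[simp] theorem inv_u (x : ES1 p n) : (x⁻¹).u = -x.u := rfl
@[simp] theorem inv_w (x : ES1 p n) : (x⁻¹).w = -x.w := rfl
@[simp] theorem inv_z (x : ES1 p n) : (x⁻¹).z = -x.z + x.u ⬝ᵥ x.w := rfl

instance : Group (ES1 p n) :=
  Group.ofLeftAxioms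
    (fun a b c => by
      ext <;> simp [add_dotProduct, dotProduct_add] <;> ring)
    (fun a => by ext <;> simp)
    (fun a => by ext <;> simp [neg_dotProduct] <;> ring)

end ES1


namespace ES1Aux

variable {p n : ℕ}

theorem mem_center_iff (hp : (1 : ZMod p) ≠ 0) (x : ES1 p n) :
    x ∈ Subgroup.center (ES1 p n) ↔ x.u = 0 ∧ x.w = 0 := by
  rw [Subgroup.mem_center_iff]
  constructor
  · intro h
    constructor
    · funext i
      have := congrArg ES1.z (h ⟨0, Pi.single i 1, 0⟩)
      simp [dotProduct_single, single_dotProduct] at this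
      simpa using this
    · funext i
      have := congrArg ES1.z (h ⟨Pi.single i 1, 0, 0⟩)
      simp [dotProduct_single, single_dotProduct] at this
      simpa using this
  · rintro ⟨hu, hw⟩ g
    ext <;> simp [hu, hw, add_comm]

section auts

variable [Fact p.Prime]

/-- scaling automorphism -/
def scaleAut (a : ZMod p) (ha : a ≠ 0) : ES1 p n ≃* ES1 p n where
  toFun x := ⟨a • x.u, x.w, a * x.z⟩
  invFun x := ⟨a⁻¹ • x.u, x.w, a⁻¹ * x.z⟩
  left_inv x := by
    ext <;> simp [smul_smul, ← mul_assoc, inv_mul_cancel₀ ha]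
  right_inv x := by
    ext <;> simp [smul_smul, ← mul_assoc, mul_inv_cancel₀ ha]
  map_mul' x y := by
    ext <;> (simp [smul_add, smul_dotProduct, smul_eq_mul]; try ring)

/-- swap automorphism -/
def swapAut : ES1 p n ≃* ES1 p n where
  toFun x := ⟨x.w, -x.u, x.z - x.u ⬝ᵥ x.w⟩
  invFun x := ⟨-x.w, x.u, x.z - x.u ⬝ᵥ x.w⟩
  left_inv x := by
    ext <;> (simp [neg_dotProduct, dotProduct_neg,
      dotProduct_comm x.w x.u]; try ring)
  right_inv x := by
    ext <;> (simp [neg_dotProduct, dotProduct_neg,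
      dotProduct_comm x.w x.u]; try ring)
  map_mul' x y := by
    ext <;> (simp [add_dotProduct, dotProduct_add, dotProduct_neg,
      neg_dotProduct, dotProduct_comm x.w y.u]; try ring)

theorem two_ne_zero' (hodd : Odd p) : (2 : ZMod p) ≠ 0 := by
  have hp2 : p ≠ 2 := by
    rintro rfl
    simp [Nat.odd_iff] at hodd
  have : ((2 : ℕ) : ZMod p) ≠ 0 := by
    rw [Ne, ZMod.natCast_eq_zero_iff]
    intro h
    exact hp2 ((Nat.prime_dvd_prime_iff_eq Fact.out Nat.prime_two).mp h)
  simpa using this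

variable (hodd : Odd p) (m : (Fin n → ZMod p) → (Fin n → ZMod p))
  (hadd : ∀ v w, m (v + w) = m v + m w)
  (hsym : ∀ v w, m v ⬝ᵥ w = m w ⬝ᵥ v)

/-- right shear -/
def shearR : ES1 p n ≃* ES1 p n where
  toFun x := ⟨x.u + m x.w, x.w, x.z + (2 : ZMod p)⁻¹ * (m x.w ⬝ᵥ x.w)⟩
  invFun x := ⟨x.u - m x.w, x.w, x.z - (2 : ZMod p)⁻¹ * (m x.w ⬝ᵥ x.w)⟩
  left_inv x := by ext <;> simp
  right_inv x := by ext <;> simp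
  map_mul' x y := by
    have h2 : (2 : ZMod p)⁻¹ * 2 = 1 := inv_mul_cancel₀ (two_ne_zero' hodd)
    ext
    · simp [hadd]; abel
    · simp
    · simp only [ES1.mul_z, ES1.mul_u, ES1.mul_w, hadd, add_dotProduct,
        dotProduct_add]
      rw [hsym y.w x.w]
      linear_combination (m x.w ⬝ᵥ y.w) * h2

/-- left shear -/
def shearL : ES1 p n ≃* ES1 p n where
  toFun x := ⟨x.u, x.w + m x.u, x.z + (2 : ZMod p)⁻¹ * (m x.u ⬝ᵥ x.u)⟩
  invFun x := ⟨x.u, x.w - m x.u, x.z - (2 : ZMod p)⁻¹ * (m x.u ⬝ᵥ x.u)⟩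
  left_inv x := by ext <;> simp
  right_inv x := by ext <;> simp
  map_mul' x y := by
    have h2 : (2 : ZMod p)⁻¹ * 2 = 1 := inv_mul_cancel₀ (two_ne_zero' hodd)
    ext
    · simp
    · simp [hadd]; abel
    · simp only [ES1.mul_z, ES1.mul_u, ES1.mul_w, hadd, add_dotProduct,
        dotProduct_add]
      rw [hsym y.u x.u, dotProduct_comm x.u (m y.u), hsym y.u x.u]
      linear_combination (m x.u ⬝ᵥ y.u) * h2

/-- z-translation by linear functionals -/
def zAut (a b : Fin n → ZMod p) : ES1 p n ≃* ES1 p n where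
  toFun x := ⟨x.u, x.w, x.z + a ⬝ᵥ x.u + b ⬝ᵥ x.w⟩
  invFun x := ⟨x.u, x.w, x.z - a ⬝ᵥ x.u - b ⬝ᵥ x.w⟩
  left_inv x := by ext <;> (simp; try ring)
  right_inv x := by ext <;> (simp; try ring)
  map_mul' x y := by
    ext <;> (simp [dotProduct_add, add_dotProduct]; try ring)

end auts

/-- existence of a symmetric additive map hitting a target -/
theorem exists_sym [Fact p.Prime] {u : Fin n → ZMod p} (hu : u ≠ 0)
    (t : Fin n → ZMod p) :
    ∃ m : (Fin n → ZMod p) → (Fin n → ZMod p),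
      (∀ v w, m (v + w) = m v + m w) ∧ (∀ v w, m v ⬝ᵥ w = m w ⬝ᵥ v) ∧ m u = t := by
  obtain ⟨i, hi⟩ : ∃ i, u i ≠ 0 := by
    by_contra h
    push_neg at h
    exact hu (funext h)
  set b : Fin n → ZMod p := (u i)⁻¹ • (Pi.single i 1 : Fin n → ZMod p) with hb
  have hbu : b ⬝ᵥ u = 1 := by
    simp [hb, smul_dotProduct, single_dotProduct, inv_mul_cancel₀ hi]
  refine ⟨fun w => (b ⬝ᵥ w) • t + (t ⬝ᵥ w) • b - ((t ⬝ᵥ u) * (b ⬝ᵥ w)) • b, ?_, ?_, ?_⟩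
  · intro v w
    simp [dotProduct_add, add_smul, mul_add]
    abel
  · intro v w
    simp [add_dotProduct, sub_dotProduct, smul_dotProduct,
      smul_eq_mul, dotProduct_comm b v, dotProduct_comm t v,
      dotProduct_comm b w, dotProduct_comm t w]
    ring
  · simp [hbu]


section apply

variable [Fact p.Prime] (hodd : Odd p) (m : (Fin n → ZMod p) → (Fin n → ZMod p))
  (hadd : ∀ v w, m (v + w) = m v + m w)
  (hsym : ∀ v w, m v ⬝ᵥ w = m w ⬝ᵥ v)

@[simp] theorem scaleAut_apply (a : ZMod p) (ha : a ≠ 0) (x : ES1 p n) :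
    scaleAut a ha x = ⟨a • x.u, x.w, a * x.z⟩ := rfl

@[simp] theorem swapAut_apply (x : ES1 p n) :
    (swapAut : ES1 p n ≃* ES1 p n) x = ⟨x.w, -x.u, x.z - x.u ⬝ᵥ x.w⟩ := rfl

@[simp] theorem shearR_apply (x : ES1 p n) :
    shearR hodd m hadd hsym x
      = ⟨x.u + m x.w, x.w, x.z + (2 : ZMod p)⁻¹ * (m x.w ⬝ᵥ x.w)⟩ := rfl

@[simp] theorem shearL_apply (x : ES1 p n) :
    shearL hodd m hadd hsym x
      = ⟨x.u, x.w + m x.u, x.z + (2 : ZMod p)⁻¹ * (m x.u ⬝ᵥ x.u)⟩ := rfl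

@[simp] theorem zAut_apply (a b : Fin n → ZMod p) (x : ES1 p n) :
    zAut a b x = ⟨x.u, x.w, x.z + a ⬝ᵥ x.u + b ⬝ᵥ x.w⟩ := rfl

end apply

section main

variable [Fact p.Prime]

theorem to_g0_aux (hodd : Odd p) (hn : 0 < n) (x : ES1 p n) (hu : x.u ≠ 0) :
    ∃ σ : ES1 p n ≃* ES1 p n, σ x = ⟨Pi.single ⟨0, hn⟩ 1, 0, 0⟩ := by
  set e : Fin n → ZMod p := Pi.single ⟨0, hn⟩ 1 with he
  have hee : e ⬝ᵥ e = 1 := by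
    simp [he, single_dotProduct, Pi.single_eq_same]
  have hene : e ≠ 0 := by
    intro h
    have := congrFun h ⟨0, hn⟩
    simp [he, Pi.single_eq_same] at this
  obtain ⟨m1, h1a, h1s, h1⟩ := exists_sym hu (-x.w)
  obtain ⟨m2, h2a, h2s, h2⟩ := exists_sym (neg_ne_zero.mpr hu) e
  obtain ⟨m3, h3a, h3s, h3⟩ := exists_sym hene x.u
  set y : ES1 p n := (shearL hodd m3 h3a h3s) ((shearR hodd m2 h2a h2s)
      (swapAut ((shearL hodd m1 h1a h1s) x))) with hy
  have hyu : y.u = e := by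
    simp [hy, h1, h2]
  have hyw : y.w = 0 := by
    simp [hy, h1, h2, h3]
  refine ⟨((((shearL hodd m1 h1a h1s).trans swapAut).trans
      (shearR hodd m2 h2a h2s)).trans (shearL hodd m3 h3a h3s)).trans
      (zAut ((-y.z) • e) 0), ?_⟩
  have hyy : ((((shearL hodd m1 h1a h1s).trans swapAut).trans
      (shearR hodd m2 h2a h2s)).trans (shearL hodd m3 h3a h3s)) x = y := rfl
  rw [MulEquiv.trans_apply, hyy, zAut_apply]
  ext
  · simp [hyu]
  · simp [hyw]
  · simp [hyu, hyw, smul_dotProduct, hee]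

theorem to_g0 (hodd : Odd p) (hn : 0 < n) (x : ES1 p n)
    (hx : x ∉ Subgroup.center (ES1 p n)) :
    ∃ σ : ES1 p n ≃* ES1 p n, σ x = ⟨Pi.single ⟨0, hn⟩ 1, 0, 0⟩ := by
  have hp1 : (1 : ZMod p) ≠ 0 := by
    haveI : Fact (1 < p) := ⟨(Fact.out : p.Prime).one_lt⟩
    exact one_ne_zero
  rw [mem_center_iff hp1, not_and_or] at hx
  by_cases hu : x.u = 0
  · have hw : x.w ≠ 0 := by tauto
    obtain ⟨σ, hσ⟩ := to_g0_aux hodd hn (swapAut x) (by simpa using hw)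
    exact ⟨swapAut.trans σ, hσ⟩
  · exact to_g0_aux hodd hn x hu

theorem center_mapsto (σ : ES1 p n ≃* ES1 p n) (x : ES1 p n)
    (hx : x ∈ Subgroup.center (ES1 p n)) : σ x ∈ Subgroup.center (ES1 p n) := by
  rw [Subgroup.mem_center_iff] at hx ⊢
  intro k
  calc k * σ x = σ (σ.symm k) * σ x := by rw [σ.apply_symm_apply]
    _ = σ (σ.symm k * x) := (σ.map_mul _ _).symm
    _ = σ (x * σ.symm k) := by rw [hx]
    _ = σ x * k := by rw [σ.map_mul, σ.apply_symm_apply]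

end main

end ES1Aux


theorem ES1_automorphism_orbits (p n : ℕ) [Fact p.Prime] (hodd : Odd p) (hn : 0 < n) :
    (∀ x y : ES1 p n,
      (∃ σ : ES1 p n ≃* ES1 p n, σ x = y) ↔
        ((x = 1 ∧ y = 1) ∨
         (x ∈ Subgroup.center (ES1 p n) ∧ x ≠ 1 ∧
            y ∈ Subgroup.center (ES1 p n) ∧ y ≠ 1) ∨
         (x ∉ Subgroup.center (ES1 p n) ∧ y ∉ Subgroup.center (ES1 p n)))) ∧
    Nat.card {x : ES1 p n | x ∈ Subgroup.center (ES1 p n) ∧ x ≠ 1} = p - 1 ∧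
    Nat.card {x : ES1 p n | x ∉ Subgroup.center (ES1 p n)} = p ^ (2 * n + 1) - p := by
  have hp1 : (1 : ZMod p) ≠ 0 := by
    haveI : Fact (1 < p) := ⟨(Fact.out : p.Prime).one_lt⟩
    exact one_ne_zero
  haveI : NeZero p := ⟨(Fact.out : p.Prime).ne_zero⟩
  have hc := ES1Aux.mem_center_iff (p := p) (n := n) hp1
  refine ⟨?_, ?_, ?_⟩
  · intro x y
    constructor
    · rintro ⟨σ, rfl⟩
      by_cases hx1 : x = 1
      · exact Or.inl ⟨hx1, by rw [hx1, _root_.map_one]⟩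
      by_cases hxc : x ∈ Subgroup.center (ES1 p n)
      · refine Or.inr (Or.inl ⟨hxc, hx1, ES1Aux.center_mapsto σ x hxc, ?_⟩)
        intro h
        exact hx1 (σ.injective (h.trans (_root_.map_one σ).symm))
      · refine Or.inr (Or.inr ⟨hxc, fun h => hxc ?_⟩)
        simpa using ES1Aux.center_mapsto σ.symm _ h
    · rintro (⟨rfl, rfl⟩ | ⟨hxc, hx1, hyc, hy1⟩ | ⟨hxc, hyc⟩)
      · exact ⟨MulEquiv.refl _, rfl⟩
      · obtain ⟨hxu, hxw⟩ := (hc x).mp hxc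
        obtain ⟨hyu, hyw⟩ := (hc y).mp hyc
        have hxz : x.z ≠ 0 := fun h => hx1 (by ext <;> simp [hxu, hxw, h])
        have hyz : y.z ≠ 0 := fun h => hy1 (by ext <;> simp [hyu, hyw, h])
        refine ⟨ES1Aux.scaleAut (y.z * x.z⁻¹)
          (mul_ne_zero hyz (inv_ne_zero hxz)), ?_⟩
        ext
        · simp [hxu, hyu]
        · simp [hxw, hyw]
        · simp [mul_assoc, inv_mul_cancel₀ hxz]
      · obtain ⟨σx, hσx⟩ := ES1Aux.to_g0 hodd hn x hxc
        obtain ⟨σy, hσy⟩ := ES1Aux.to_g0 hodd hn y hyc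
        refine ⟨σx.trans σy.symm, ?_⟩
        rw [MulEquiv.trans_apply, hσx, ← hσy, MulEquiv.symm_apply_apply]
  · have e1 : {x : ES1 p n | x ∈ Subgroup.center (ES1 p n) ∧ x ≠ 1} ≃
        {z : ZMod p // z ≠ 0} := by
      refine ⟨fun x => ⟨x.1.z, ?_⟩, fun z => ⟨⟨0, 0, z.1⟩, ?_, ?_⟩, ?_, ?_⟩
      · obtain ⟨hxc, hx1⟩ := x.2
        obtain ⟨hxu, hxw⟩ := (hc _).mp hxc
        exact fun h => hx1 (by ext <;> simp [hxu, hxw, h])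
      · exact (hc _).mpr ⟨rfl, rfl⟩
      · exact fun h => z.2 (congrArg ES1.z h)
      · intro x
        obtain ⟨hxc, hx1⟩ := x.2
        obtain ⟨hxu, hxw⟩ := (hc _).mp hxc
        exact Subtype.ext (by ext <;> simp [hxu, hxw])
      · intro z
        rfl
    rw [Nat.card_congr e1, Nat.card_eq_fintype_card,
      Fintype.card_subtype_compl, Fintype.card_subtype_eq, ZMod.card]
  · have e2 : {x : ES1 p n | x ∉ Subgroup.center (ES1 p n)} ≃
        ({v : (Fin n → ZMod p) × (Fin n → ZMod p) // v ≠ 0} × ZMod p) := by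
      refine ⟨fun x => (⟨(x.1.u, x.1.w), ?_⟩, x.1.z),
        fun t => ⟨⟨t.1.1.1, t.1.1.2, t.2⟩, ?_⟩, ?_, ?_⟩
      · intro h
        have h1 : x.1.u = 0 := congrArg Prod.fst h
        have h2 : x.1.w = 0 := congrArg Prod.snd h
        exact x.2 ((hc _).mpr ⟨h1, h2⟩)
      · intro hmem
        obtain ⟨h1, h2⟩ := (hc _).mp hmem
        exact t.1.2 (Prod.ext h1 h2)
      · intro x
        exact Subtype.ext (by ext <;> rfl)
      · intro t
        rfl
    have harith : (p ^ n * p ^ n - 1) * p = p ^ (2 * n + 1) - p := by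
      rw [Nat.sub_mul, one_mul, ← pow_add, ← pow_succ]
      have : n + n + 1 = 2 * n + 1 := by ring
      rw [this]
    rw [Nat.card_congr e2, Nat.card_prod, Nat.card_eq_fintype_card,
      Nat.card_eq_fintype_card, Fintype.card_subtype_compl, Fintype.card_subtype_eq,
      Fintype.card_prod, Fintype.card_fun, ZMod.card, Fintype.card_fin, ← harith]
end

section
/- For G = ES_1(p,n), the endomorphism semigroup induces a partial order on the automorphism orbits: for all x, y ∈ G, if there exist endomorphisms σ, τ of G with σ(x) = y and τ(y) = x, then there exists an automorphism of G mapping x to y. Moreover the resulting order on orbits is the total order {e} < Z(G)∖{e} < G∖Z(G). -/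
/-!
Write `g = (v, z)` with `v = (u, w) ∈ 𝔽_p²ⁿ`. For `n > 0` every central element is a commutator,
so endomorphisms preserve the centre. A noncentral `x` has a linear form `φ` in `v` with
`φ x = 1`, and as `G` has exponent `p` (`p` odd), `g ↦ y ^ φ g` is an endomorphism sending `x` to
any given `y`. The shears `(u, w, z) ↦ (u, w + M u, z + u ⬝ᵥ M u / 2)` with `M`
symmetric, the swap `(u, w) ↦ (w, -u)` and the central shifts `z ↦ z + c ⬝ᵥ u` act transitively
on the noncentral elements, and scalings act transitively on the nontrivial central ones.
-/

open Matrix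

open scoped commutatorElement

theorem Matrix.exists_dotProduct_eq_one {ι K : Type*} [Fintype ι] [Field K] {a : ι → K}
    (ha : a ≠ 0) : ∃ f : ι → K, f ⬝ᵥ a = 1 := by
  classical
  obtain ⟨i, hi⟩ := Function.ne_iff.mp ha
  exact ⟨Pi.single i (a i)⁻¹, by simp [single_dotProduct, inv_mul_cancel₀ hi]⟩

theorem Matrix.IsSymm.dotProduct_mulVec_comm {ι R : Type*} [Fintype ι] [CommSemiring R]
    {M : Matrix ι ι R} (hM : M.IsSymm) (x y : ι → R) : x ⬝ᵥ M *ᵥ y = y ⬝ᵥ M *ᵥ x := by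
  rw [dotProduct_mulVec, ← mulVec_transpose, hM.eq, dotProduct_comm]

theorem Matrix.exists_isSymm_mulVec_eq {ι K : Type*} [Fintype ι] [Field K] {a : ι → K}
    (ha : a ≠ 0) (b : ι → K) : ∃ M : Matrix ι ι K, M.IsSymm ∧ M *ᵥ a = b := by
  obtain ⟨f, hf⟩ := exists_dotProduct_eq_one ha
  refine ⟨vecMulVec b f + vecMulVec f b - (a ⬝ᵥ b) • vecMulVec f f, ?_, ?_⟩
  · simp only [IsSymm, transpose_sub, transpose_add, transpose_smul, transpose_vecMulVec,
      add_comm]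
  · simp only [sub_mulVec, add_mulVec, smul_mulVec, vecMulVec_mulVec, op_smul_eq_smul,
      hf, dotProduct_comm b a, one_smul, add_sub_cancel_right]

def zmodPowersHom {M : Type*} [Monoid M] {p : ℕ} [NeZero p] (y : M) (hy : y ^ p = 1) :
    Multiplicative (ZMod p) →* M where
  toFun k := y ^ k.toAdd.val
  map_one' := by simp
  map_mul' j k := by
    rw [toAdd_mul, ZMod.val_add, ← pow_eq_pow_mod _ hy, pow_add]

namespace ES1

variable {p n : ℕ}

theorem mem_center_iff {x : ES1 p n} :
    x ∈ Subgroup.center (ES1 p n) ↔ x.u = 0 ∧ x.w = 0 := by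
  rw [Subgroup.mem_center_iff]
  refine ⟨fun h => ⟨funext fun i => ?_, funext fun i => ?_⟩, fun ⟨hu, hw⟩ g => ?_⟩
  · simpa [dotProduct_single] using congrArg ES1.z (h ⟨0, Pi.single i 1, 0⟩)
  · simpa [single_dotProduct] using (congrArg ES1.z (h ⟨Pi.single i 1, 0, 0⟩)).symm
  · ext <;> simp [hu, hw, add_comm]

theorem eq_mk_of_mem_center {x : ES1 p n} (hx : x ∈ Subgroup.center (ES1 p n)) :
    x = ⟨0, 0, x.z⟩ := by
  obtain ⟨hu, hw⟩ := mem_center_iff.mp hx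
  ext <;> simp [hu, hw]

theorem mk_zero_zero_eq_one_iff {z : ZMod p} : (⟨0, 0, z⟩ : ES1 p n) = 1 ↔ z = 0 := by
  simp [ES1.ext_iff]

theorem commutatorElement_mem_center (g h : ES1 p n) : ⁅g, h⁆ ∈ Subgroup.center (ES1 p n) :=
  mem_center_iff.mpr ⟨by simp [commutatorElement_def], by simp [commutatorElement_def]⟩

theorem exists_commutatorElement_eq (hn : 0 < n) {x : ES1 p n}
    (hx : x ∈ Subgroup.center (ES1 p n)) : ∃ g h : ES1 p n, ⁅g, h⁆ = x := by
  let e : Fin n → ZMod p := Pi.single ⟨0, hn⟩ 1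
  refine ⟨⟨e, 0, 0⟩, ⟨0, x.z • e, 0⟩, ?_⟩
  rw [eq_mk_of_mem_center hx]
  ext <;> simp [commutatorElement_def, e]

theorem map_mem_center (σ : ES1 p n →* ES1 p n) {x : ES1 p n}
    (hx : x ∈ Subgroup.center (ES1 p n)) : σ x ∈ Subgroup.center (ES1 p n) := by
  rcases n.eq_zero_or_pos with rfl | hn
  · exact mem_center_iff.mpr ⟨Subsingleton.elim _ _, Subsingleton.elim _ _⟩
  · obtain ⟨g, h, rfl⟩ := exists_commutatorElement_eq hn hx
    rw [map_commutatorElement]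
    exact commutatorElement_mem_center _ _

def scale (c : (ZMod p)ˣ) : ES1 p n ≃* ES1 p n where
  toFun g := ⟨(c : ZMod p) • g.u, g.w, c * g.z⟩
  invFun g := ⟨(↑c⁻¹ : ZMod p) • g.u, g.w, ↑c⁻¹ * g.z⟩
  left_inv g := by ext <;> simp
  right_inv g := by ext <;> simp
  map_mul' a b := by ext <;> simp [smul_dotProduct] <;> ring

@[simp] theorem scale_apply (c : (ZMod p)ˣ) (g : ES1 p n) :
    scale c g = ⟨(c : ZMod p) • g.u, g.w, c * g.z⟩ := rfl

theorem exists_mulEquiv_apply_eq_of_mem_center [Fact p.Prime] {x y : ES1 p n}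
    (hx : x ∈ Subgroup.center (ES1 p n)) (hx1 : x ≠ 1)
    (hy : y ∈ Subgroup.center (ES1 p n)) (hy1 : y ≠ 1) :
    ∃ e : ES1 p n ≃* ES1 p n, e x = y := by
  obtain ⟨hxu, hxw⟩ := mem_center_iff.mp hx
  obtain ⟨hyu, hyw⟩ := mem_center_iff.mp hy
  rw [eq_mk_of_mem_center hx, ne_eq, mk_zero_zero_eq_one_iff] at hx1
  rw [eq_mk_of_mem_center hy, ne_eq, mk_zero_zero_eq_one_iff] at hy1
  refine ⟨scale (Units.mk0 (y.z / x.z) (div_ne_zero hy1 hx1)), ?_⟩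
  ext <;> simp [hxu, hxw, hyu, hyw, div_mul_cancel₀ _ hx1]

def swap : ES1 p n ≃* ES1 p n where
  toFun g := ⟨g.w, -g.u, g.z - g.u ⬝ᵥ g.w⟩
  invFun g := ⟨-g.w, g.u, g.z - g.w ⬝ᵥ g.u⟩
  left_inv g := by ext <;> simp [dotProduct_comm]
  right_inv g := by ext <;> simp [dotProduct_comm]
  map_mul' a b := by
    ext <;> simp [add_dotProduct, dotProduct_add, dotProduct_comm a.w b.u] <;> ring

@[simp] theorem swap_apply (g : ES1 p n) : swap g = ⟨g.w, -g.u, g.z - g.u ⬝ᵥ g.w⟩ := rfl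

def shiftCenter (v : Fin n → ZMod p) : ES1 p n ≃* ES1 p n where
  toFun g := ⟨g.u, g.w, g.z + v ⬝ᵥ g.u⟩
  invFun g := ⟨g.u, g.w, g.z - v ⬝ᵥ g.u⟩
  left_inv g := by ext <;> simp
  right_inv g := by ext <;> simp
  map_mul' a b := by
    ext <;> simp [dotProduct_add]
    ring

@[simp] theorem shiftCenter_apply (v : Fin n → ZMod p) (g : ES1 p n) :
    shiftCenter v g = ⟨g.u, g.w, g.z + v ⬝ᵥ g.u⟩ := rfl

/-- Lifts the symplectic map `(u, w) ↦ (u, w + M u)`: since `M` is symmetric, the quadratic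
form `⅟2 u ⬝ᵥ M u` polarises to the change `u ⬝ᵥ M u'` of the cocycle. -/
def shear [Invertible (2 : ZMod p)] (M : Matrix (Fin n) (Fin n) (ZMod p)) (hM : M.IsSymm) :
    ES1 p n ≃* ES1 p n where
  toFun g := ⟨g.u, g.w + M *ᵥ g.u, g.z + ⅟2 * (g.u ⬝ᵥ M *ᵥ g.u)⟩
  invFun g := ⟨g.u, g.w - M *ᵥ g.u, g.z - ⅟2 * (g.u ⬝ᵥ M *ᵥ g.u)⟩
  left_inv g := by ext <;> simp
  right_inv g := by ext <;> simp
  map_mul' a b := by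
    ext
    · simp
    · simp [mulVec_add]; abel
    · simp only [mul_z, mul_u, mulVec_add, dotProduct_add, add_dotProduct,
        hM.dotProduct_mulVec_comm b.u a.u]
      linear_combination (a.u ⬝ᵥ M *ᵥ b.u) * invOf_mul_self (2 : ZMod p)

@[simp] theorem shear_apply [Invertible (2 : ZMod p)] (M : Matrix (Fin n) (Fin n) (ZMod p))
    (hM : M.IsSymm) (g : ES1 p n) :
    shear M hM g = ⟨g.u, g.w + M *ᵥ g.u, g.z + ⅟2 * (g.u ⬝ᵥ M *ᵥ g.u)⟩ := rfl

section Transitivity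

variable [Fact p.Prime] [Invertible (2 : ZMod p)]

theorem exists_mulEquiv_apply_eq_mk_zero_zero {x : ES1 p n} (hu : x.u ≠ 0) :
    ∃ e : ES1 p n ≃* ES1 p n, e x = ⟨x.u, 0, 0⟩ := by
  obtain ⟨f, hf⟩ := exists_dotProduct_eq_one hu
  obtain ⟨M, hM, hMu⟩ := exists_isSymm_mulVec_eq hu (-x.w)
  refine ⟨(shear M hM).trans (shiftCenter (-(x.z + ⅟2 * (x.u ⬝ᵥ M *ᵥ x.u)) • f)), ?_⟩
  ext <;> simp [hMu, smul_dotProduct, hf]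

theorem exists_mulEquiv_mk_zero_zero {a b : Fin n → ZMod p} (ha : a ≠ 0) (hb : b ≠ 0) :
    ∃ e : ES1 p n ≃* ES1 p n, e ⟨a, 0, 0⟩ = ⟨b, 0, 0⟩ := by
  obtain ⟨M, hM, hMa⟩ := exists_isSymm_mulVec_eq ha b
  -- the shear puts `b` into the `w`-slot, and the swap moves it to the `u`-slot
  set x := swap (shear M hM ⟨a, 0, 0⟩)
  have hxu : x.u = b := by simp [x, hMa]
  obtain ⟨e, he⟩ := exists_mulEquiv_apply_eq_mk_zero_zero (hxu ▸ hb)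
  exact ⟨((shear M hM).trans swap).trans e, hxu ▸ he⟩

theorem exists_mulEquiv_apply_eq_mk_of_notMem_center {x : ES1 p n}
    (hx : x ∉ Subgroup.center (ES1 p n)) :
    ∃ (e : ES1 p n ≃* ES1 p n) (a : Fin n → ZMod p), a ≠ 0 ∧ e x = ⟨a, 0, 0⟩ := by
  rcases not_and_or.mp (mem_center_iff.not.mp hx) with hu | hw
  · obtain ⟨e, he⟩ := exists_mulEquiv_apply_eq_mk_zero_zero hu
    exact ⟨e, x.u, hu, he⟩
  · obtain ⟨e, he⟩ := exists_mulEquiv_apply_eq_mk_zero_zero (x := swap x) hw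
    exact ⟨swap.trans e, x.w, hw, he⟩

theorem exists_mulEquiv_apply_eq_of_notMem_center {x y : ES1 p n}
    (hx : x ∉ Subgroup.center (ES1 p n)) (hy : y ∉ Subgroup.center (ES1 p n)) :
    ∃ e : ES1 p n ≃* ES1 p n, e x = y := by
  obtain ⟨ex, a, ha, hex⟩ := exists_mulEquiv_apply_eq_mk_of_notMem_center hx
  obtain ⟨ey, b, hb, hey⟩ := exists_mulEquiv_apply_eq_mk_of_notMem_center hy
  obtain ⟨e, he⟩ := exists_mulEquiv_mk_zero_zero ha hb
  exact ⟨(ex.trans e).trans ey.symm, by simp [hex, he, ← hey]⟩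

end Transitivity

theorem pow_eq_mk (y : ES1 p n) (k : ℕ) :
    y ^ k = ⟨(k : ZMod p) • y.u, (k : ZMod p) • y.w,
      k * y.z + k.choose 2 * (y.u ⬝ᵥ y.w)⟩ := by
  induction k with
  | zero => ext <;> simp
  | succ k ih =>
    rw [pow_succ, ih]
    ext <;> push_cast [Nat.choose_succ_succ, Nat.choose_one_right] <;>
      simp [smul_dotProduct] <;> ring

theorem pow_eq_one_of_odd (hp : Odd p) (y : ES1 p n) : y ^ p = 1 := by
  have hchoose : ((p.choose 2 : ℕ) : ZMod p) = 0 := by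
    rw [ZMod.natCast_eq_zero_iff, Nat.choose_two_right,
      Nat.mul_div_assoc p (even_iff_two_dvd.mp (Nat.Odd.sub_odd hp odd_one))]
    exact dvd_mul_right p _
  ext <;> simp [pow_eq_mk, hchoose]

def linearForm (r s : Fin n → ZMod p) : ES1 p n →* Multiplicative (ZMod p) where
  toFun g := .ofAdd (r ⬝ᵥ g.u + s ⬝ᵥ g.w)
  map_one' := by simp
  map_mul' a b := by
    simp only [mul_u, mul_w, dotProduct_add, ← ofAdd_add, add_add_add_comm]

theorem exists_monoidHom_apply_eq_of_notMem_center [Fact p.Prime] (hp : Odd p) {x : ES1 p n}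
    (hx : x ∉ Subgroup.center (ES1 p n)) (y : ES1 p n) :
    ∃ σ : ES1 p n →* ES1 p n, σ x = y := by
  obtain ⟨r, s, hrs⟩ : ∃ r s : Fin n → ZMod p, r ⬝ᵥ x.u + s ⬝ᵥ x.w = 1 := by
    rcases not_and_or.mp (mem_center_iff.not.mp hx) with hu | hw
    · obtain ⟨r, hr⟩ := exists_dotProduct_eq_one hu
      exact ⟨r, 0, by simp [hr]⟩
    · obtain ⟨s, hs⟩ := exists_dotProduct_eq_one hw
      exact ⟨0, s, by simp [hs]⟩
  refine ⟨(zmodPowersHom y (pow_eq_one_of_odd hp y)).comp (linearForm r s), ?_⟩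
  simp [zmodPowersHom, linearForm, hrs, ZMod.val_one]

end ES1

theorem ES1_endomorphisms_induce_partial_order_general (p n : ℕ) [Fact p.Prime] (hodd : Odd p) :
    (∀ x y : ES1 p n, (∃ σ : ES1 p n →* ES1 p n, σ x = y) →
      (∃ τ : ES1 p n →* ES1 p n, τ y = x) → ∃ e : ES1 p n ≃* ES1 p n, e x = y) ∧
    (∀ x : ES1 p n, x ∉ Subgroup.center (ES1 p n) →
      ∀ y : ES1 p n, ∃ σ : ES1 p n →* ES1 p n, σ x = y) ∧
    (∀ x ∈ Subgroup.center (ES1 p n), x ≠ 1 →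
      ∀ y ∈ Subgroup.center (ES1 p n), ∃ σ : ES1 p n →* ES1 p n, σ x = y) ∧
    (∀ x ∈ Subgroup.center (ES1 p n), ∀ y : ES1 p n,
      (∃ σ : ES1 p n →* ES1 p n, σ x = y) → y ∈ Subgroup.center (ES1 p n)) ∧
    (∀ y : ES1 p n, (∃ σ : ES1 p n →* ES1 p n, σ 1 = y) → y = 1) := by
  have : Invertible (2 : ZMod p) := invertibleOfNonzero <| Ring.two_ne_zero <| by
    rw [ZMod.ringChar_zmod_n]
    rintro rfl
    exact Nat.not_odd_iff_even.mpr even_two hodd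
  refine ⟨?_, fun x hx y => ES1.exists_monoidHom_apply_eq_of_notMem_center hodd hx y, ?_,
    fun x hx _ ⟨σ, hσ⟩ => hσ ▸ ES1.map_mem_center σ hx, fun _ ⟨σ, hσ⟩ => hσ ▸ map_one σ⟩
  · rintro x _ ⟨σ, rfl⟩ ⟨τ, hτ⟩
    by_cases hx : x ∈ Subgroup.center (ES1 p n)
    · by_cases hx1 : x = 1
      · exact ⟨MulEquiv.refl _, by simp [hx1]⟩
      · refine ES1.exists_mulEquiv_apply_eq_of_mem_center hx hx1 (ES1.map_mem_center σ hx) ?_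
        exact fun h => hx1 (by rw [← hτ, h, map_one])
    · exact ES1.exists_mulEquiv_apply_eq_of_notMem_center hx fun hy =>
        hx (hτ ▸ ES1.map_mem_center τ hy)
  · intro x hx hx1 y hy
    by_cases hy1 : y = 1
    · exact ⟨1, by simp [hy1]⟩
    · obtain ⟨e, he⟩ := ES1.exists_mulEquiv_apply_eq_of_mem_center hx hx1 hy hy1
      exact ⟨e.toMonoidHom, he⟩

theorem ES1_endomorphisms_induce_partial_order (p n : ℕ) [Fact p.Prime] (hodd : Odd p)
    (hn : 0 < n) :
    (∀ x y : ES1 p n, (∃ σ : ES1 p n →* ES1 p n, σ x = y) →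
      (∃ τ : ES1 p n →* ES1 p n, τ y = x) → ∃ e : ES1 p n ≃* ES1 p n, e x = y) ∧
    (∀ x : ES1 p n, x ∉ Subgroup.center (ES1 p n) →
      ∀ y : ES1 p n, ∃ σ : ES1 p n →* ES1 p n, σ x = y) ∧
    (∀ x ∈ Subgroup.center (ES1 p n), x ≠ 1 →
      ∀ y ∈ Subgroup.center (ES1 p n), ∃ σ : ES1 p n →* ES1 p n, σ x = y) ∧
    (∀ x ∈ Subgroup.center (ES1 p n), ∀ y : ES1 p n,
      (∃ σ : ES1 p n →* ES1 p n, σ x = y) → y ∈ Subgroup.center (ES1 p n)) ∧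
    (∀ y : ES1 p n, (∃ σ : ES1 p n →* ES1 p n, σ 1 = y) → y = 1) :=
  ES1_endomorphisms_induce_partial_order_general p n hodd
end

section
/- For G = ES_1(p,n), the image of the natural homomorphism Φ₁ : Aut(G) → Aut(G/Z(G)) = GL_{2n}(𝔽_p) is exactly the symplectic similitude group Sp^{scalar}(2n,𝔽_p) = {M ∈ GL_{2n}(𝔽_p) : MᵗΔM = lΔ for some l ∈ 𝔽_p^*}. -/
open Matrix

/-- The standard symplectic matrix `Δ = [[0, Iₙ], [-Iₙ, 0]]`. -/
def Delta (p n : ℕ) : Matrix (Fin n ⊕ Fin n) (Fin n ⊕ Fin n) (ZMod p) :=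
  Matrix.fromBlocks 0 1 (-1) 0


/-! In the coordinates `(v, s)` with `v = (u, w)` and `s = z - ⟨u, w⟩/2`, the group law of `ES₁(p,n)`
becomes `(v, s)(v', s') = (v + v', s + s' + ω(v, v')/2)`, where `ω(v, v') = vᵀΔv'`. Hence
`(v, s) ↦ (Mv, l s)` is an automorphism whenever `MᵀΔM = lΔ` with `l ≠ 0`. Conversely, an
automorphism `σ` acting on `G/Z(G)` by `M` acts on the centre `Z(G) ≅ 𝔽_p` by an additive, hence
scalar, map `c ↦ l c` with `l ≠ 0`; since the commutator of `g` and `h` is the central element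
`ω(ḡ, h̄)`, applying `σ` gives `ω(Mḡ, Mh̄) = l ω(ḡ, h̄)`. -/

section BilinearForm

variable {R ι : Type*} [CommSemiring R] [Fintype ι]

theorem Matrix.dotProduct_transpose_mul_mul_mulVec (M A : Matrix ι ι R) (v v' : ι → R) :
    v ⬝ᵥ ((Mᵀ * A * M) *ᵥ v') = (M *ᵥ v) ⬝ᵥ (A *ᵥ (M *ᵥ v')) := by
  simp only [dotProduct_mulVec, ← mulVec_mulVec, vecMul_transpose]

theorem Matrix.transpose_mul_mul_eq_smul_iff [DecidableEq ι] (M A : Matrix ι ι R) (l : R) :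
    Mᵀ * A * M = l • A ↔ ∀ v v', (M *ᵥ v) ⬝ᵥ (A *ᵥ (M *ᵥ v')) = l * (v ⬝ᵥ (A *ᵥ v')) := by
  rw [← (toLinearMap₂' R (S₁ := R) (S₂ := R)).injective.eq_iff, LinearMap.ext_iff₂]
  simp only [map_smul, LinearMap.smul_apply, toLinearMap₂'_apply',
    dotProduct_transpose_mul_mul_mulVec, smul_eq_mul]

end BilinearForm

namespace ES1

variable {p n : ℕ}

def toVec (g : ES1 p n) : Fin n ⊕ Fin n → ZMod p := Sum.elim g.u g.w

def central (c : ZMod p) : ES1 p n := ⟨0, 0, c⟩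

@[simp] theorem toVec_mul (g h : ES1 p n) : toVec (g * h) = toVec g + toVec h := by
  funext x; cases x <;> rfl

@[simp] theorem toVec_central (c : ZMod p) : toVec (central c : ES1 p n) = 0 := by
  funext x; cases x <;> rfl

@[simp] theorem central_mul_z (c : ZMod p) (g : ES1 p n) : (central c * g).z = c + g.z := by
  simp [central]

theorem central_add (a b : ZMod p) : (central (a + b) : ES1 p n) = central a * central b := by
  ext <;> simp [central]

theorem eq_central_of_toVec_eq_zero {g : ES1 p n} (hg : toVec g = 0) : g = central g.z := by
  ext i
  · exact congrFun hg (Sum.inl i)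
  · exact congrFun hg (Sum.inr i)
  · rfl

theorem dotProduct_Delta_mulVec (g h : ES1 p n) :
    toVec g ⬝ᵥ (Delta p n *ᵥ toVec h) = g.u ⬝ᵥ h.w - g.w ⬝ᵥ h.u := by
  simp only [toVec, Delta, fromBlocks_mulVec, zero_mulVec, one_mulVec, neg_mulVec, zero_add,
    add_zero, sumElim_dotProduct_sumElim, dotProduct_neg, Sum.elim_comp_inl, Sum.elim_comp_inr,
    sub_eq_add_neg]

theorem mul_eq_central_mul_mul (g h : ES1 p n) :
    g * h = central (toVec g ⬝ᵥ (Delta p n *ᵥ toVec h)) * (h * g) := by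
  ext <;> simp only [mul_u, mul_w, mul_z, central, dotProduct_Delta_mulVec]
  · simp [add_comm]
  · simp [add_comm]
  · rw [dotProduct_comm g.w h.u, zero_dotProduct]; ring

section Symm

variable [Fact p.Prime]

def zSymm (g : ES1 p n) : ZMod p := g.z - g.u ⬝ᵥ g.w / 2

def mkSymm (v : Fin n ⊕ Fin n → ZMod p) (s : ZMod p) : ES1 p n :=
  ⟨v ∘ Sum.inl, v ∘ Sum.inr, s + (v ∘ Sum.inl) ⬝ᵥ (v ∘ Sum.inr) / 2⟩

@[simp] theorem toVec_mkSymm (v : Fin n ⊕ Fin n → ZMod p) (s : ZMod p) :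
    toVec (mkSymm v s : ES1 p n) = v :=
  Sum.elim_comp_inl_inr v

@[simp] theorem zSymm_mkSymm (v : Fin n ⊕ Fin n → ZMod p) (s : ZMod p) :
    zSymm (mkSymm v s : ES1 p n) = s :=
  add_sub_cancel_right s _

theorem ext_toVec_zSymm {g h : ES1 p n} (hv : toVec g = toVec h) (hs : zSymm g = zSymm h) :
    g = h := by
  have hu : g.u = h.u := funext fun i => congrFun hv (Sum.inl i)
  have hw : g.w = h.w := funext fun i => congrFun hv (Sum.inr i)
  refine ES1.ext hu hw ?_
  simpa [zSymm, hu, hw] using hs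

theorem zSymm_mul (h2 : (2 : ZMod p) ≠ 0) (g h : ES1 p n) :
    zSymm (g * h) = zSymm g + zSymm h + toVec g ⬝ᵥ (Delta p n *ᵥ toVec h) / 2 := by
  simp only [zSymm, mul_u, mul_w, mul_z, dotProduct_Delta_mulVec, add_dotProduct, dotProduct_add,
    dotProduct_comm g.w h.u]
  field_simp
  ring

variable {M N : Matrix (Fin n ⊕ Fin n) (Fin n ⊕ Fin n) (ZMod p)} {l l' : ZMod p}

def similitude (M : Matrix (Fin n ⊕ Fin n) (Fin n ⊕ Fin n) (ZMod p)) (l : ZMod p)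
    (g : ES1 p n) : ES1 p n :=
  mkSymm (M *ᵥ toVec g) (l * zSymm g)

@[simp] theorem toVec_similitude (g : ES1 p n) : toVec (similitude M l g) = M *ᵥ toVec g :=
  toVec_mkSymm _ _

theorem similitude_similitude (g : ES1 p n) :
    similitude N l' (similitude M l g) = similitude (N * M) (l' * l) g := by
  simp [similitude, mulVec_mulVec, mul_assoc]

theorem similitude_one_one (g : ES1 p n) : similitude 1 1 g = g :=
  ext_toVec_zSymm (by simp) (by simp [similitude])

theorem similitude_mul (h2 : (2 : ZMod p) ≠ 0) (hM : Mᵀ * Delta p n * M = l • Delta p n)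
    (g h : ES1 p n) : similitude M l (g * h) = similitude M l g * similitude M l h := by
  have hω := (transpose_mul_mul_eq_smul_iff M (Delta p n) l).mp hM (toVec g) (toVec h)
  refine ext_toVec_zSymm (by simp [mulVec_add]) ?_
  simp only [zSymm_mul h2, similitude, toVec_mkSymm, zSymm_mkSymm, hω]
  ring

noncomputable def similitudeEquiv (h2 : (2 : ZMod p) ≠ 0) (hU : IsUnit M) (hl : l ≠ 0)
    (hM : Mᵀ * Delta p n * M = l • Delta p n) : ES1 p n ≃* ES1 p n where
  toFun := similitude M l
  invFun := similitude M⁻¹ l⁻¹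
  left_inv g := by
    rw [similitude_similitude, nonsing_inv_mul M ((isUnit_iff_isUnit_det M).mp hU),
      inv_mul_cancel₀ hl, similitude_one_one]
  right_inv g := by
    rw [similitude_similitude, mul_nonsing_inv M ((isUnit_iff_isUnit_det M).mp hU),
      mul_inv_cancel₀ hl, similitude_one_one]
  map_mul' := similitude_mul h2 hM

end Symm

section Automorphism

variable (σ : ES1 p n ≃* ES1 p n) {M : Matrix (Fin n ⊕ Fin n) (Fin n ⊕ Fin n) (ZMod p)}

theorem isUnit_of_toVec_map (hσ : ∀ g, toVec (σ g) = M *ᵥ toVec g) : IsUnit M := by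
  rw [← mulVec_surjective_iff_isUnit]
  intro v
  refine ⟨toVec (σ.symm ⟨v ∘ Sum.inl, v ∘ Sum.inr, 0⟩), ?_⟩
  rw [← hσ, MulEquiv.apply_symm_apply]
  exact Sum.elim_comp_inl_inr v

theorem exists_map_central [Fact p.Prime] (hσ : ∀ g, toVec (σ g) = M *ᵥ toVec g) :
    ∃ l : ZMod p, l ≠ 0 ∧ ∀ c, σ (central c) = central (l * c) := by
  have hcentral (c : ZMod p) : σ (central c) = central (σ (central c)).z :=
    eq_central_of_toVec_eq_zero (by rw [hσ, toVec_central, mulVec_zero])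
  let f : ZMod p →+ ZMod p := AddMonoidHom.mk' (fun c => (σ (central c)).z) fun a b => by
    rw [central_add, map_mul, hcentral a, central_mul_z]
    rfl
  have hf (c : ZMod p) : f c = f 1 * c := by
    simpa [mul_comm] using ZMod.map_smul f c 1
  refine ⟨f 1, fun h0 => ?_, fun c => (hcentral c).trans (congrArg central (hf c))⟩
  have h : σ (central 1) = σ 1 := by
    rw [hcentral, map_one]
    exact congrArg central h0
  exact one_ne_zero (congrArg ES1.z (σ.injective h))

theorem exists_transpose_mul_Delta_mul_eq_smul [Fact p.Prime]
    (hσ : ∀ g, toVec (σ g) = M *ᵥ toVec g) :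
    ∃ l : ZMod p, l ≠ 0 ∧ Mᵀ * Delta p n * M = l • Delta p n := by
  obtain ⟨l, hl, hcentral⟩ := exists_map_central σ hσ
  refine ⟨l, hl, (transpose_mul_mul_eq_smul_iff M _ l).mpr fun v v' => ?_⟩
  let g : ES1 p n := mkSymm v 0
  let h : ES1 p n := mkSymm v' 0
  have e₁ := congrArg (fun x => (σ x).z) (mul_eq_central_mul_mul g h)
  have e₂ := congrArg ES1.z (mul_eq_central_mul_mul (σ g) (σ h))
  simp only [map_mul, hcentral, central_mul_z, hσ, toVec_mkSymm, g, h] at e₁ e₂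
  linear_combination e₁ - e₂

end Automorphism

end ES1

theorem ES1_image_of_aut_in_GL_general (p n : ℕ) [Fact p.Prime] (hodd : Odd p) :
    {M : Matrix (Fin n ⊕ Fin n) (Fin n ⊕ Fin n) (ZMod p) |
        ∃ σ : ES1 p n ≃* ES1 p n,
          ∀ g : ES1 p n, Sum.elim (σ g).u (σ g).w = M *ᵥ Sum.elim g.u g.w}
      = {M : Matrix (Fin n ⊕ Fin n) (Fin n ⊕ Fin n) (ZMod p) |
          IsUnit M ∧ ∃ l : ZMod p, l ≠ 0 ∧ Mᵀ * Delta p n * M = l • Delta p n} := by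
  have h2 : (2 : ZMod p) ≠ 0 := Ring.two_ne_zero <| by
    rw [ZMod.ringChar_zmod_n]
    rintro rfl
    exact absurd hodd (by decide)
  ext M
  constructor
  · rintro ⟨σ, hσ⟩
    exact ⟨ES1.isUnit_of_toVec_map σ hσ, ES1.exists_transpose_mul_Delta_mul_eq_smul σ hσ⟩
  · rintro ⟨hU, l, hl, hM⟩
    exact ⟨ES1.similitudeEquiv h2 hU hl hM, fun _ => ES1.toVec_similitude _⟩

theorem ES1_image_of_aut_in_GL (p n : ℕ) [Fact p.Prime] (hodd : Odd p) (hn : 0 < n) :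
    {M : Matrix (Fin n ⊕ Fin n) (Fin n ⊕ Fin n) (ZMod p) |
        ∃ σ : ES1 p n ≃* ES1 p n,
          ∀ g : ES1 p n, Sum.elim (σ g).u (σ g).w = M *ᵥ Sum.elim g.u g.w}
      = {M : Matrix (Fin n ⊕ Fin n) (Fin n ⊕ Fin n) (ZMod p) |
          IsUnit M ∧ ∃ l : ZMod p, l ≠ 0 ∧ Mᵀ * Delta p n * M = l • Delta p n} :=
  ES1_image_of_aut_in_GL_general p n hodd
end
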